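/- Let μ > 0, M ∈ ℝ, and let A_M be the diffusion wave. Let E(ξ) = exp((1/(2μ)) ∫_{−∞}^ξ A_M(y) dy). Let V : ℝ → ℝ be twice continuously differentiable and integrable, with V'(y) → 0 and y V(y) → 0 as y → −∞. Define (U V)(ξ) = d/dξ [ E(ξ) ∫_{−∞}^ξ V(y) dy ]. Then for all ξ ∈ ℝ, μ (U V)''(ξ) + (1/2) d/dξ(ξ (U V)(ξ)) − d/dξ(A_M(ξ) (U V)(ξ)) = d/dξ [ E(ξ) ( μ V'(ξ) + (1/2) ξ V(ξ) ) ]; that is, the linearization A_μ^M of the rescaled Burgers equation about A_M and the operator L_μ satisfy the conjugacy A_μ^M ∘ U = U ∘ L_μ. -/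

import Mathlib

/-!
Write `W(ξ) = ∫_{-∞}^ξ V`, so that `U V = (E W)' = E' W + E V`. Two first-order equations drive
the computation: `2μ E' = A_M E`, by the fundamental theorem of calculus, and the once-integrated
stationary equation `2μ A_M' = A_M² - ξ A_M`, which follows from the explicit formula
`A_M = α₀ g / D` with `g = e^{-ξ²/(4μ)}` and `D' = -(α₀/(2μ)) g`. With them,
`μ (U V)' + ξ (U V)/2 - A_M (U V) = E (μ V' + ξ V/2)` holds pointwise, the terms in `W` cancelling
exactly by the profile equation, and differentiating once more gives the conjugacy.
Since `D` stays between `1` and `e^{-M/(2μ)}`, `A_M` is continuous and integrable, as needed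
for `E`.
-/

open MeasureTheory

/-- The diffusion wave `A_M` with viscosity `μ` and mass `M`:
`A_M(ξ) = α₀ e^{−ξ²/(4μ)} / (1 − (α₀/(2μ)) ∫_{−∞}^ξ e^{−η²/(4μ)} dη)` with
`α₀ = √(μ/π)(1 − e^{−M/(2μ)})`. -/
noncomputable def AM (μ M ξ : ℝ) : ℝ :=
  Real.sqrt (μ / Real.pi) * (1 - Real.exp (-M / (2 * μ))) * Real.exp (-ξ ^ 2 / (4 * μ)) /
    (1 - Real.sqrt (μ / Real.pi) * (1 - Real.exp (-M / (2 * μ))) / (2 * μ) *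
      ∫ η in Set.Iio ξ, Real.exp (-η ^ 2 / (4 * μ)))

/-- `E(ξ) = exp((1/(2μ)) ∫_{−∞}^ξ A_M(y) dy)`. -/
noncomputable def Efun (μ M ξ : ℝ) : ℝ :=
  Real.exp (1 / (2 * μ) * ∫ y in Set.Iio ξ, AM μ M y)

/-- The conjugacy operator `U`: `(U V)(ξ) = d/dξ [ E(ξ) ∫_{−∞}^ξ V(y) dy ]`. -/
noncomputable def UV (μ M : ℝ) (V : ℝ → ℝ) (ξ : ℝ) : ℝ :=
  deriv (fun x => Efun μ M x * ∫ y in Set.Iio x, V y) ξ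

open Real Set Filter

theorem hasDerivAt_integral_Iio {f : ℝ → ℝ} (hf : Integrable f) {ξ : ℝ}
    (hfξ : ContinuousAt f ξ) :
    HasDerivAt (fun x => ∫ y in Iio x, f y) (f ξ) ξ := by
  have h : (fun x => ∫ y in Iio x, f y) = fun x => (∫ y in Iic 0, f y) + ∫ y in (0)..x, f y := by
    funext x
    rw [← integral_Iic_eq_integral_Iio,
      ← intervalIntegral.integral_Iic_sub_Iic hf.integrableOn hf.integrableOn]
    ring
  rw [h]
  exact (intervalIntegral.integral_hasDerivAt_right hf.intervalIntegrable
    hf.aestronglyMeasurable.stronglyMeasurableAtFilter hfξ).const_add _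

theorem deriv_deriv_of_forall_eq {μ a : ℝ} (hμ : μ ≠ 0) {f g h F : ℝ → ℝ} {ξ : ℝ}
    (hg : DifferentiableAt ℝ g ξ) (hh : DifferentiableAt ℝ h ξ) (hF : DifferentiableAt ℝ F ξ)
    (hf : ∀ x, μ * deriv f x + a * g x - h x = F x) :
    μ * deriv (deriv f) ξ + a * deriv g ξ - deriv h ξ = deriv F ξ := by
  have hf' : deriv f = fun x => μ⁻¹ * (F x - a * g x + h x) := by
    funext x; rw [← hf x]; field_simp; ring
  have hF' := (hF.hasDerivAt.fun_sub (hg.hasDerivAt.const_mul a)).fun_add hh.hasDerivAt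
  rw [hf', (hF'.const_mul μ⁻¹).deriv]
  field_simp
  ring

section Conjugacy

variable {μ : ℝ} {A E W V : ℝ → ℝ}

theorem hasDerivAt_deriv_mul {x A' V' : ℝ} (hA : HasDerivAt A A' x)
    (hE : ∀ y, HasDerivAt E (A y * E y / (2 * μ)) y) (hW : ∀ y, HasDerivAt W (V y) y)
    (hV : HasDerivAt V V' x) :
    HasDerivAt (deriv fun y => E y * W y)
      ((A' * E x + A x * (A x * E x / (2 * μ))) / (2 * μ) * W x
        + A x * E x / (2 * μ) * V x + (A x * E x / (2 * μ) * V x + E x * V')) x := by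
  have hU : deriv (fun y => E y * W y) = fun y => A y * E y / (2 * μ) * W y + E y * V y :=
    funext fun y => ((hE y).mul (hW y)).deriv
  rw [hU]
  exact ((((hA.mul (hE x)).div_const _).mul (hW x)).add ((hE x).mul hV))


theorem conjugacy_identity (hμ : μ ≠ 0) {x : ℝ}
    (hA : HasDerivAt A ((A x ^ 2 - x * A x) / (2 * μ)) x)
    (hE : ∀ y, HasDerivAt E (A y * E y / (2 * μ)) y) (hW : ∀ y, HasDerivAt W (V y) y)
    (hV : DifferentiableAt ℝ V x) :
    μ * deriv (deriv fun y => E y * W y) x + 1 / 2 * (x * deriv (fun y => E y * W y) x)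
        - A x * deriv (fun y => E y * W y) x
      = E x * (μ * deriv V x + 1 / 2 * x * V x) := by
  rw [(hasDerivAt_deriv_mul hA hE hW hV.hasDerivAt).deriv, ((hE x).fun_mul (hW x)).deriv]
  field_simp
  ring

end Conjugacy

noncomputable def heatGaussian (μ ξ : ℝ) : ℝ := exp (-ξ ^ 2 / (4 * μ))

noncomputable def diffusionWaveAmplitude (μ M : ℝ) : ℝ := √(μ / π) * (1 - exp (-M / (2 * μ)))

noncomputable def diffusionWaveDenom (μ M ξ : ℝ) : ℝ :=
  1 - diffusionWaveAmplitude μ M / (2 * μ) * ∫ η in Iio ξ, heatGaussian μ η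

theorem AM_eq (μ M : ℝ) :
    AM μ M = fun ξ => diffusionWaveAmplitude μ M * heatGaussian μ ξ / diffusionWaveDenom μ M ξ :=
  rfl

theorem heatGaussian_eq (μ : ℝ) : heatGaussian μ = fun ξ => exp (-(1 / (4 * μ)) * ξ ^ 2) := by
  funext ξ
  rw [heatGaussian, neg_div, neg_mul, div_mul_eq_mul_div, one_mul]

theorem heatGaussian_pos (μ ξ : ℝ) : 0 < heatGaussian μ ξ := exp_pos _

theorem continuous_heatGaussian (μ : ℝ) : Continuous (heatGaussian μ) := by
  unfold heatGaussian; fun_prop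

theorem integrable_heatGaussian {μ : ℝ} (hμ : 0 < μ) : Integrable (heatGaussian μ) := by
  rw [heatGaussian_eq]
  exact integrable_exp_neg_mul_sq (by positivity)

theorem integral_heatGaussian {μ : ℝ} (hμ : 0 < μ) : ∫ ξ, heatGaussian μ ξ = √(4 * π * μ) := by
  rw [heatGaussian_eq, integral_gaussian]
  congr 1
  field_simp

theorem hasDerivAt_heatGaussian (μ ξ : ℝ) :
    HasDerivAt (heatGaussian μ) (-(ξ / (2 * μ)) * heatGaussian μ ξ) ξ := by
  refine (((hasDerivAt_pow 2 ξ).fun_neg).div_const (4 * μ)).exp.congr_deriv ?_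
  rw [heatGaussian]
  ring

section DiffusionWave

variable {μ : ℝ} (M : ℝ)

theorem diffusionWaveAmplitude_mul_integral_heatGaussian (hμ : 0 < μ) :
    diffusionWaveAmplitude μ M / (2 * μ) * ∫ ξ, heatGaussian μ ξ = 1 - exp (-M / (2 * μ)) := by
  have hsqrt : √(μ / π) * √(4 * π * μ) = 2 * μ := by
    rw [← sqrt_mul (by positivity), show μ / π * (4 * π * μ) = (2 * μ) ^ 2 by field_simp; ring,
      sqrt_sq (by positivity)]
  rw [integral_heatGaussian hμ, diffusionWaveAmplitude]
  set e := exp (-M / (2 * μ))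
  set r := √(μ / π)
  set s := √(4 * π * μ)
  field_simp
  linear_combination (1 - e) * hsqrt

theorem min_le_diffusionWaveDenom (hμ : 0 < μ) (ξ : ℝ) :
    min (exp (-M / (2 * μ))) 1 ≤ diffusionWaveDenom μ M ξ := by
  set c := diffusionWaveAmplitude μ M / (2 * μ)
  have hI₀ : 0 ≤ ∫ η in Iio ξ, heatGaussian μ η :=
    setIntegral_nonneg measurableSet_Iio fun η _ => (heatGaussian_pos μ η).le
  have hI₁ : ∫ η in Iio ξ, heatGaussian μ η ≤ ∫ η, heatGaussian μ η :=
    setIntegral_le_integral (integrable_heatGaussian hμ)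
      (Eventually.of_forall fun η => (heatGaussian_pos μ η).le)
  have htotal := diffusionWaveAmplitude_mul_integral_heatGaussian M hμ
  rw [diffusionWaveDenom]
  rcases le_or_gt c 0 with hc | hc
  · nlinarith [min_le_right (exp (-M / (2 * μ))) 1]
  · nlinarith [min_le_left (exp (-M / (2 * μ))) 1]

theorem diffusionWaveDenom_pos (hμ : 0 < μ) (ξ : ℝ) : 0 < diffusionWaveDenom μ M ξ :=
  (lt_min (exp_pos _) one_pos).trans_le (min_le_diffusionWaveDenom M hμ ξ)

theorem hasDerivAt_diffusionWaveDenom (hμ : 0 < μ) (ξ : ℝ) :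
    HasDerivAt (diffusionWaveDenom μ M)
      (-(diffusionWaveAmplitude μ M / (2 * μ) * heatGaussian μ ξ)) ξ :=
  ((hasDerivAt_integral_Iio (integrable_heatGaussian hμ)
    (continuous_heatGaussian μ).continuousAt).const_mul _).const_sub 1

theorem continuous_diffusionWaveDenom (hμ : 0 < μ) : Continuous (diffusionWaveDenom μ M) :=
  continuous_iff_continuousAt.2 fun ξ => (hasDerivAt_diffusionWaveDenom M hμ ξ).continuousAt

theorem continuous_AM (hμ : 0 < μ) : Continuous (AM μ M) := by
  rw [AM_eq]
  exact (continuous_const.mul (continuous_heatGaussian μ)).div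
    (continuous_diffusionWaveDenom M hμ) fun ξ => (diffusionWaveDenom_pos M hμ ξ).ne'

theorem integrable_AM (hμ : 0 < μ) : Integrable (AM μ M) := by
  set δ := min (exp (-M / (2 * μ))) 1
  have hδ : 0 < δ := lt_min (exp_pos _) one_pos
  refine ((integrable_heatGaussian hμ).const_mul (|diffusionWaveAmplitude μ M| / δ)).mono'
    (continuous_AM M hμ).aestronglyMeasurable (Eventually.of_forall fun ξ => ?_)
  have hD := diffusionWaveDenom_pos M hμ ξ
  rw [AM_eq, norm_div, norm_mul, Real.norm_of_nonneg (heatGaussian_pos μ ξ).le,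
    Real.norm_of_nonneg hD.le, Real.norm_eq_abs, div_le_iff₀ hD]
  calc |diffusionWaveAmplitude μ M| * heatGaussian μ ξ
      = |diffusionWaveAmplitude μ M| / δ * heatGaussian μ ξ * δ := by field_simp
    _ ≤ |diffusionWaveAmplitude μ M| / δ * heatGaussian μ ξ * diffusionWaveDenom μ M ξ :=
      mul_le_mul_of_nonneg_left (min_le_diffusionWaveDenom M hμ ξ)
        (mul_nonneg (div_nonneg (abs_nonneg _) hδ.le) (heatGaussian_pos μ ξ).le)

theorem hasDerivAt_AM (hμ : 0 < μ) (ξ : ℝ) :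
    HasDerivAt (AM μ M) ((AM μ M ξ ^ 2 - ξ * AM μ M ξ) / (2 * μ)) ξ := by
  have hD := (diffusionWaveDenom_pos M hμ ξ).ne'
  have h := ((hasDerivAt_heatGaussian μ ξ).const_mul (diffusionWaveAmplitude μ M)).div
    (hasDerivAt_diffusionWaveDenom M hμ ξ) hD
  refine h.congr_deriv ?_
  simp only [AM_eq]
  field_simp
  ring

theorem hasDerivAt_Efun (hμ : 0 < μ) (ξ : ℝ) :
    HasDerivAt (Efun μ M) (AM μ M ξ * Efun μ M ξ / (2 * μ)) ξ := by
  have h := ((hasDerivAt_integral_Iio (ξ := ξ) (integrable_AM M hμ)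
    (continuous_AM M hμ).continuousAt).const_mul (1 / (2 * μ))).exp
  refine h.congr_deriv ?_
  rw [Efun]
  ring

end DiffusionWave

theorem stmt7_general (μ M : ℝ) (hμ : 0 < μ) (V : ℝ → ℝ)
    (hV : ContDiff ℝ 2 V) (hVint : Integrable V) :
    ∀ ξ : ℝ,
      μ * deriv (deriv (UV μ M V)) ξ
          + 1 / 2 * deriv (fun x => x * UV μ M V x) ξ
          - deriv (fun x => AM μ M x * UV μ M V x) ξ
        = deriv (fun x => Efun μ M x * (μ * deriv V x + 1 / 2 * x * V x)) ξ := by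
  intro ξ
  have hA := hasDerivAt_AM M hμ
  have hE := hasDerivAt_Efun M hμ
  have hW (x : ℝ) : HasDerivAt (fun y => ∫ t in Iio y, V t) (V x) x :=
    hasDerivAt_integral_Iio hVint hV.continuous.continuousAt
  have hV₁ : Differentiable ℝ V := hV.differentiable (by norm_num)
  have hU : Differentiable ℝ (UV μ M V) := fun x =>
    (hasDerivAt_deriv_mul (hA x) hE hW (hV₁ x).hasDerivAt).differentiableAt
  refine deriv_deriv_of_forall_eq hμ.ne' (differentiableAt_id.mul (hU ξ))
    ((hA ξ).differentiableAt.mul (hU ξ)) ?_ fun x => conjugacy_identity hμ.ne' (hA x) hE hW (hV₁ x)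
  exact (hE ξ).differentiableAt.mul (((hV.differentiable_deriv_two ξ).const_mul μ).add
    ((differentiableAt_id.const_mul _).mul (hV₁ ξ)))

/-- for twice continuously differentiable integrable `V` with `V'(y) → 0`
and `y V(y) → 0` as `y → −∞`, the conjugacy `A_μ^M ∘ U = U ∘ L_μ` holds pointwise:
`μ (U V)'' + (1/2)(ξ (U V))' − (A_M (U V))' = d/dξ [ E (μ V' + (1/2) ξ V) ]`. -/
theorem stmt7 (μ M : ℝ) (hμ : 0 < μ) (V : ℝ → ℝ)
    (hV : ContDiff ℝ 2 V) (hVint : Integrable V)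
    (hV' : Filter.Tendsto (fun y => deriv V y) Filter.atBot (nhds 0))
    (hyV : Filter.Tendsto (fun y => y * V y) Filter.atBot (nhds 0)) :
    ∀ ξ : ℝ,
      μ * deriv (deriv (UV μ M V)) ξ
          + 1 / 2 * deriv (fun x => x * UV μ M V x) ξ
          - deriv (fun x => AM μ M x * UV μ M V x) ξ
        = deriv (fun x => Efun μ M x * (μ * deriv V x + 1 / 2 * x * V x)) ξ :=
  stmt7_general μ M hμ V hV hVint
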